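/- arXiv:2601.00776 — 2 statements merged into one kernel-verified Lean document; each statement's English description precedes it below -/
import Mathlib

section
/- Let (Ω, ℱ, P) be a probability space, let L and K be positive integers, let G : Ω → Fin L and H : Ω → Fin K be measurable, and let Y ∈ L²(P). For each cell (ℓ, k) set π ℓ k = P(G = ℓ, H = k), assume π ℓ k > 0 for all (ℓ, k), and let μ ℓ k = E[Y · 1{G = ℓ, H = k}] / π ℓ k be the cell mean, με = E[Y] the grand mean, and ξ = Y − μ_{G,H} the within-cell residual (with μ_{G,H}(ω) = μ (G ω) (H ω)). Let α : Fin L → ℝ, ψ : Fin K → ℝ, and κ ℓ k = μ ℓ k − με − α ℓ − ψ k satisfy the orthogonality relations Σ_{ℓ,k} π ℓ k · α ℓ · κ ℓ k = 0 and Σ_{ℓ,k} π ℓ k · ψ k · κ ℓ k = 0. Then the variance of Y decomposes exactly as: Var(Y) = Σ_ℓ (Σ_k π ℓ k) · (α ℓ)² + Σ_k (Σ_ℓ π ℓ k) · (ψ k)² + 2 Σ_{ℓ,k} π ℓ k · α ℓ · ψ k + Σ_{ℓ,k} π ℓ k · (κ ℓ k)² + E[ξ²]. -/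
open MeasureTheory Finset

/-!
Write `c = (G, H)` for the cell map. The residual `ξ = Y - μ ∘ c` integrates to zero over every
cell, hence is orthogonal to every function of `c`; so `Y - E[Y] = (μ ∘ c - E[Y]) + ξ` is an
orthogonal splitting and `Var Y = ∑ π (μ - E[Y])² + E[ξ²]` (the law of total variance for a finite
partition). Writing `μ - E[Y] = α + ψ + κ` and expanding the square, the two cross terms with `κ`
vanish by the orthogonality hypotheses.
-/

namespace FinitePartition

variable {Ω ι : Type*} [MeasurableSpace Ω] {P : Measure Ω}
  [Fintype ι] [MeasurableSpace ι] [MeasurableSingletonClass ι] {c : Ω → ι}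

noncomputable def cellMean (P : Measure Ω) (c : Ω → ι) (Y : Ω → ℝ) (i : ι) : ℝ :=
  (∫ ω in c ⁻¹' {i}, Y ω ∂P) / P.real (c ⁻¹' {i})

theorem integral_eq_sum_setIntegral_fiber (hc : Measurable c) {g : Ω → ℝ}
    (hg : Integrable g P) : ∫ ω, g ω ∂P = ∑ i, ∫ ω in c ⁻¹' {i}, g ω ∂P := by
  have hcover : (⋃ i, c ⁻¹' {i}) = Set.univ := by ext; simp
  rw [← integral_iUnion_fintype (fun i => hc (.singleton i)) (pairwise_disjoint_fiber c)
    fun _ => hg.integrableOn, hcover, setIntegral_univ]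

omit [Fintype ι] [MeasurableSpace ι] [MeasurableSingletonClass ι] in
/-- Also true on null cells, where `cellMean` is `0` by the convention `x / 0 = 0`. -/
theorem setIntegral_fiber_eq_cellMean_mul [IsFiniteMeasure P] (Y : Ω → ℝ) (i : ι) :
    ∫ ω in c ⁻¹' {i}, Y ω ∂P = cellMean P c Y i * P.real (c ⁻¹' {i}) := by
  by_cases hnull : P.real (c ⁻¹' {i}) = 0
  · rw [hnull, mul_zero]
    exact setIntegral_measure_zero _ ((measureReal_eq_zero_iff).1 hnull)
  · rw [cellMean, div_mul_cancel₀ _ hnull]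

omit [Fintype ι] in
theorem setIntegral_fiber_congr (hc : Measurable c) (F : ι → Ω → ℝ) (i : ι) :
    ∫ ω in c ⁻¹' {i}, F (c ω) ω ∂P = ∫ ω in c ⁻¹' {i}, F i ω ∂P :=
  setIntegral_congr_fun (hc (.singleton i)) fun ω hω => by rw [Set.mem_singleton_iff.1 hω]

theorem memLp_comp [IsFiniteMeasure P] (hc : Measurable c) (h : ι → ℝ) (p : ENNReal) :
    MemLp (fun ω => h (c ω)) p P :=
  (memLp_map_measure_iff .of_discrete hc.aemeasurable).1 .of_discrete

theorem integral_comp_eq_sum [IsFiniteMeasure P] (hc : Measurable c) (h : ι → ℝ) :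
    ∫ ω, h (c ω) ∂P = ∑ i, P.real (c ⁻¹' {i}) * h i := by
  rw [← integral_map hc.aemeasurable .of_discrete, integral_fintype .of_finite]
  simp only [map_measureReal_apply hc (.singleton _), smul_eq_mul]

theorem integral_comp_mul_sub_cellMean_eq_zero [IsFiniteMeasure P] (hc : Measurable c)
    {Y : Ω → ℝ} (hY : Integrable Y P) (h : ι → ℝ) :
    ∫ ω, h (c ω) * (Y ω - cellMean P c Y (c ω)) ∂P = 0 := by
  have hint : Integrable (fun ω => h (c ω) * (Y ω - cellMean P c Y (c ω))) P :=
    (hY.sub ((memLp_comp hc _ 1).integrable le_rfl)).mul_of_top_right (memLp_comp hc h ⊤)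
  rw [integral_eq_sum_setIntegral_fiber hc hint]
  refine Finset.sum_eq_zero fun i _ => ?_
  rw [setIntegral_fiber_congr hc (fun j ω => h j * (Y ω - cellMean P c Y j)), integral_const_mul,
    integral_sub hY.integrableOn (integrableOn_const (measure_ne_top _ _)),
    setIntegral_fiber_eq_cellMean_mul, setIntegral_const, smul_eq_mul]
  ring

theorem variance_eq_sum_cellMean_add_integral_sq [IsProbabilityMeasure P] (hc : Measurable c)
    {Y : Ω → ℝ} (hY : MemLp Y 2 P) :
    ProbabilityTheory.variance Y P
      = ∑ i, P.real (c ⁻¹' {i}) * (cellMean P c Y i - ∫ ω, Y ω ∂P) ^ 2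
        + ∫ ω, (Y ω - cellMean P c Y (c ω)) ^ 2 ∂P := by
  set m := cellMean P c Y
  set d : ι → ℝ := fun i => m i - ∫ ω, Y ω ∂P
  have hr : MemLp (fun ω => Y ω - m (c ω)) 2 P := hY.sub (memLp_comp hc m 2)
  have hd : Integrable (fun ω => d (c ω) ^ 2) P := (memLp_comp hc d 2).integrable_sq
  have hdr : Integrable (fun ω => 2 * d (c ω) * (Y ω - m (c ω))) P :=
    (hr.integrable one_le_two).mul_of_top_right (memLp_comp hc (fun i => 2 * d i) ⊤)
  have hdr' : Integrable (fun ω => d (c ω) ^ 2 + 2 * d (c ω) * (Y ω - m (c ω))) P := hd.add hdr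
  calc ProbabilityTheory.variance Y P
      = ∫ ω, (d (c ω) ^ 2 + 2 * d (c ω) * (Y ω - m (c ω)) + (Y ω - m (c ω)) ^ 2) ∂P := by
        rw [ProbabilityTheory.variance_eq_integral hY.aemeasurable]
        congr 1 with ω
        ring
    _ = _ := by
        rw [integral_add hdr' hr.integrable_sq, integral_add hd hdr,
          integral_comp_mul_sub_cellMean_eq_zero hc (hY.integrable one_le_two) (fun i => 2 * d i),
          add_zero, integral_comp_eq_sum hc fun i => d i ^ 2]

end FinitePartition

theorem sum_sum_mul_add_add_sq_of_orthogonal {ι κ : Type*} [Fintype ι] [Fintype κ]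
    (π : ι → κ → ℝ) (α : ι → ℝ) (ψ : κ → ℝ) (r : ι → κ → ℝ)
    (horthα : ∑ i, ∑ j, π i j * α i * r i j = 0)
    (horthψ : ∑ i, ∑ j, π i j * ψ j * r i j = 0) :
    ∑ i, ∑ j, π i j * (α i + ψ j + r i j) ^ 2
      = (∑ i, (∑ j, π i j) * α i ^ 2) + (∑ j, (∑ i, π i j) * ψ j ^ 2)
        + 2 * (∑ i, ∑ j, π i j * α i * ψ j) + (∑ i, ∑ j, π i j * r i j ^ 2) := by
  have hexpand : ∑ i, ∑ j, π i j * (α i + ψ j + r i j) ^ 2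
      = ∑ i, ∑ j, π i j * α i ^ 2 + ∑ i, ∑ j, π i j * ψ j ^ 2
        + 2 * (∑ i, ∑ j, π i j * α i * ψ j) + ∑ i, ∑ j, π i j * r i j ^ 2
        + 2 * (∑ i, ∑ j, π i j * α i * r i j) + 2 * (∑ i, ∑ j, π i j * ψ j * r i j) := by
    simp only [Finset.mul_sum, ← Finset.sum_add_distrib]
    exact Finset.sum_congr rfl fun i _ => Finset.sum_congr rfl fun j _ => by ring
  rw [hexpand, horthα, horthψ, Finset.sum_comm (f := fun i j => π i j * ψ j ^ 2)]
  simp only [Finset.sum_mul]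
  ring

open FinitePartition

theorem twice_variance_decomposition_general
    {Ω : Type*} [MeasurableSpace Ω] (P : Measure Ω) [IsProbabilityMeasure P]
    {L K : ℕ}
    (G : Ω → Fin L) (H : Ω → Fin K) (hG : Measurable G) (hH : Measurable H)
    (Y : Ω → ℝ) (hY : MemLp Y 2 P)
    (π : Fin L → Fin K → ℝ)
    (hπdef : ∀ ℓ k, π ℓ k = (P {ω | G ω = ℓ ∧ H ω = k}).toReal)
    (μ : Fin L → Fin K → ℝ)
    (hμdef : ∀ ℓ k, μ ℓ k = (∫ ω in {ω | G ω = ℓ ∧ H ω = k}, Y ω ∂P) / π ℓ k)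
    (με : ℝ) (hμε : με = ∫ ω, Y ω ∂P)
    (ξ : Ω → ℝ) (hξ : ∀ ω, ξ ω = Y ω - μ (G ω) (H ω))
    (α : Fin L → ℝ) (ψ : Fin K → ℝ)
    (κ : Fin L → Fin K → ℝ)
    (hκ : ∀ ℓ k, κ ℓ k = μ ℓ k - με - α ℓ - ψ k)
    (horthα : ∑ ℓ, ∑ k, π ℓ k * α ℓ * κ ℓ k = 0)
    (horthψ : ∑ ℓ, ∑ k, π ℓ k * ψ k * κ ℓ k = 0) :
    ProbabilityTheory.variance Y P
      = (∑ ℓ, (∑ k, π ℓ k) * (α ℓ) ^ 2)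
        + (∑ k, (∑ ℓ, π ℓ k) * (ψ k) ^ 2)
        + 2 * (∑ ℓ, ∑ k, π ℓ k * α ℓ * ψ k)
        + (∑ ℓ, ∑ k, π ℓ k * (κ ℓ k) ^ 2)
        + ∫ ω, (ξ ω) ^ 2 ∂P := by
  set cell : Ω → Fin L × Fin K := fun ω => (G ω, H ω)
  have hfiber : ∀ ℓ k, cell ⁻¹' {(ℓ, k)} = {ω | G ω = ℓ ∧ H ω = k} := fun ℓ k => by
    ext; simp [cell, Prod.ext_iff]
  have hπ : ∀ ℓ k, π ℓ k = P.real (cell ⁻¹' {(ℓ, k)}) := by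
    simp [hfiber, hπdef, Measure.real]
  have hμ : ∀ ℓ k, μ ℓ k = cellMean P cell Y (ℓ, k) := by
    simp [cellMean, hfiber, hμdef, hπ]
  have hμ_split : ∀ ℓ k, cellMean P cell Y (ℓ, k) - ∫ ω, Y ω ∂P = α ℓ + ψ k + κ ℓ k := by
    intro ℓ k; rw [hκ, hμ, hμε]; ring
  have hξ' : ∀ ω, ξ ω = Y ω - cellMean P cell Y (cell ω) := by simp [hξ, hμ, cell]
  rw [variance_eq_sum_cellMean_add_integral_sq (c := cell) (hG.prodMk hH) hY,
    Fintype.sum_prod_type]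
  simp only [hμ_split, ← hπ, hξ']
  rw [sum_sum_mul_add_add_sq_of_orthogonal π α ψ κ horthα horthψ]

/-- **TWICE variance decomposition.** The variance of `Y` splits exactly into worker,
firm, sorting, interaction, and within-cell residual components, given the orthogonality
of the interaction term with the projected worker and firm effects. -/
theorem twice_variance_decomposition
    {Ω : Type*} [MeasurableSpace Ω] (P : Measure Ω) [IsProbabilityMeasure P]
    {L K : ℕ} (hL : 0 < L) (hK : 0 < K)
    (G : Ω → Fin L) (H : Ω → Fin K) (hG : Measurable G) (hH : Measurable H)
    (Y : Ω → ℝ) (hY : MemLp Y 2 P)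
    (π : Fin L → Fin K → ℝ)
    (hπdef : ∀ ℓ k, π ℓ k = (P {ω | G ω = ℓ ∧ H ω = k}).toReal)
    (hπpos : ∀ ℓ k, 0 < π ℓ k)
    (μ : Fin L → Fin K → ℝ)
    (hμdef : ∀ ℓ k, μ ℓ k = (∫ ω in {ω | G ω = ℓ ∧ H ω = k}, Y ω ∂P) / π ℓ k)
    (με : ℝ) (hμε : με = ∫ ω, Y ω ∂P)
    (ξ : Ω → ℝ) (hξ : ∀ ω, ξ ω = Y ω - μ (G ω) (H ω))
    (α : Fin L → ℝ) (ψ : Fin K → ℝ)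
    (κ : Fin L → Fin K → ℝ)
    (hκ : ∀ ℓ k, κ ℓ k = μ ℓ k - με - α ℓ - ψ k)
    (horthα : ∑ ℓ, ∑ k, π ℓ k * α ℓ * κ ℓ k = 0)
    (horthψ : ∑ ℓ, ∑ k, π ℓ k * ψ k * κ ℓ k = 0) :
    ProbabilityTheory.variance Y P
      = (∑ ℓ, (∑ k, π ℓ k) * (α ℓ) ^ 2)
        + (∑ k, (∑ ℓ, π ℓ k) * (ψ k) ^ 2)
        + 2 * (∑ ℓ, ∑ k, π ℓ k * α ℓ * ψ k)
        + (∑ ℓ, ∑ k, π ℓ k * (κ ℓ k) ^ 2)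
        + ∫ ω, (ξ ω) ^ 2 ∂P :=
  twice_variance_decomposition_general P G H hG hH Y hY π hπdef μ hμdef με hμε ξ hξ α ψ κ hκ horthα
    horthψ
end

section
/- Let F be a nonempty set, let Q : F → ℝ and Q_N : F → ℝ, and let C ≥ 0 satisfy |Q_N(g) − Q(g)| ≤ C for all g ∈ F. Let (Ω, ℱ, P) be a probability space, let L²(P) contain F as a nonempty, closed, convex subset, let m₀ ∈ L²(P) with metric projection f* ∈ F, and suppose Q(f) − Q(f*) = ‖m₀ − f‖²_{L²(P)} − ‖m₀ − f*‖²_{L²(P)} for all f ∈ F. If f̂ ∈ F and ε ≥ 0 satisfy Q_N(f̂) ≤ Q_N(f*) + ε, then ‖f̂ − f*‖²_{L²(P)} ≤ 2C + ε. -/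
open MeasureTheory RealInnerProductSpace

set_option maxHeartbeats 2000000

/-- **Combined risk bound.** Combining the uniform-deviation excess-risk bound with the
Hilbert-space projection identity: if `f̂` is an `ε`-approximate empirical risk minimizer
relative to the best-in-class element `f*` (the metric projection of `m₀` onto the
nonempty closed convex class `F ⊆ L²(P)`), and the excess population risk equals the
excess squared approximation error on `F`, then `‖f̂ − f*‖² ≤ 2C + ε`. -/
theorem combined_risk_bound
    {Ω : Type*} [MeasurableSpace Ω] (P : Measure Ω) [IsProbabilityMeasure P]
    (F : Set (Lp ℝ 2 P)) (hne : F.Nonempty) (hclosed : IsClosed F) (hconv : Convex ℝ F)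
    (Q QN : Lp ℝ 2 P → ℝ)
    (C : ℝ) (hC : 0 ≤ C) (hunif : ∀ g ∈ F, |QN g - Q g| ≤ C)
    (m₀ : Lp ℝ 2 P)
    (fstar : Lp ℝ 2 P) (hfstarF : fstar ∈ F)
    (hproj : ∀ f ∈ F, ‖m₀ - fstar‖ ≤ ‖m₀ - f‖)
    (hQ : ∀ f ∈ F, Q f - Q fstar = ‖m₀ - f‖ ^ 2 - ‖m₀ - fstar‖ ^ 2)
    (fhat : Lp ℝ 2 P) (hfhatF : fhat ∈ F)
    (ε : ℝ) (hε : 0 ≤ ε) (hmin : QN fhat ≤ QN fstar + ε) :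
    ‖fhat - fstar‖ ^ 2 ≤ 2 * C + ε := by
  -- Step 1: fstar achieves the infimum, hence the variational inequality holds.
  haveI : Nonempty F := hne.to_subtype
  have hbdd : BddBelow (Set.range fun w : F => ‖m₀ - (w : Lp ℝ 2 P)‖) := by
    refine ⟨0, ?_⟩; rintro x ⟨w, rfl⟩; exact norm_nonneg _
  have hinf : ‖m₀ - fstar‖ = ⨅ w : F, ‖m₀ - (w : Lp ℝ 2 P)‖ := by
    apply le_antisymm
    · exact le_ciInf fun w => hproj w w.2
    · exact ciInf_le hbdd ⟨fstar, hfstarF⟩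
  have hvar : ∀ w ∈ F, ⟪m₀ - fstar, w - fstar⟫ ≤ 0 :=
    (norm_eq_iInf_iff_real_inner_le_zero hconv hfstarF).mp hinf
  have hip : ⟪m₀ - fstar, fhat - fstar⟫ ≤ 0 := hvar fhat hfhatF
  -- Step 2: projection inequality.
  have hdecomp : ‖m₀ - fhat‖ ^ 2 =
      ‖m₀ - fstar‖ ^ 2 - 2 * ⟪m₀ - fstar, fhat - fstar⟫ + ‖fhat - fstar‖ ^ 2 := by
    have h1 : m₀ - fhat = (m₀ - fstar) - (fhat - fstar) := by abel
    rw [h1, @norm_sub_sq_real]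
  have hkey : ‖fhat - fstar‖ ^ 2 ≤ ‖m₀ - fhat‖ ^ 2 - ‖m₀ - fstar‖ ^ 2 := by nlinarith
  -- Step 3: uniform deviation bound.
  have h1 := abs_le.mp (hunif fhat hfhatF)
  have h2 := abs_le.mp (hunif fstar hfstarF)
  have hQd := hQ fhat hfhatF
  nlinarith [h1.1, h1.2, h2.1, h2.2]
end
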